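/- For every natural number n, the hyperoctahedral group H_{n+1} (the group of signed permutations of Fin (n+1)) is already generated by the block-flip elements whose middle block has size at most one: Subgroup.closure {w_{p,q,r} : p + q + r = n + 1 and q ≤ 1} = ⊤. -/

import Mathlib

/-!
The rotation `c = w_{n,0,1}` is the `(n+1)`-cycle, and `w_{n,1,0}` is `c` times the sign flip
of the last coordinate. For `n ≥ 1`, `w_{n-1,1,1}` is `c² (n-1 n)` times the sign flip of
coordinate `n-1`, a conjugate of the previous one by `c`; so the adjacent transposition `(n-1 n)`
is generated too. A full cycle and an adjacent transposition generate the symmetric group, and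
the conjugates of one sign flip under all permutations are the coordinate sign flips, which
generate the sign vectors.
-/

/-- The action of permutations on sign vectors, permuting the coordinates. -/
def signPermAction (m : ℕ) :
    Equiv.Perm (Fin m) →* MulAut (Fin m → Multiplicative (ZMod 2)) where
  toFun σ := MulEquiv.arrowCongr σ (MulEquiv.refl (Multiplicative (ZMod 2)))
  map_one' := by ext f i; rfl
  map_mul' σ τ := by ext f i; rfl

/-- The hyperoctahedral group `H_{n+1} = C₂^{n+1} ⋊ Σ_{n+1}`, realized as the group of
signed permutations of `Fin (n+1)`. -/
abbrev HyperoctahedralGroup (n : ℕ) : Type :=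
  (Fin (n + 1) → Multiplicative (ZMod 2)) ⋊[signPermAction (n + 1)] Equiv.Perm (Fin (n + 1))

/-- The underlying permutation of the block-flip element `w_{p,q,r}`: the first block of
size `p` moves to the end, the middle block of size `q` is reversed, and the last block of
size `r` moves to the front. -/
def blockFlipPerm (n p q r : ℕ) (h : p + q + r = n + 1) : Equiv.Perm (Fin (n + 1)) :=
  (finCongr h.symm).trans <|
    (finSumFinEquiv (m := p + q) (n := r)).symm.trans <|
      ((finSumFinEquiv (m := p) (n := q)).symm.sumCongr (Equiv.refl (Fin r))).trans <|
        (Equiv.sumComm (Fin p ⊕ Fin q) (Fin r)).trans <|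
          ((Equiv.refl (Fin r)).sumCongr
              (((Equiv.refl (Fin p)).sumCongr (Fin.revPerm (n := q))).trans
                (Equiv.sumComm (Fin p) (Fin q)))).trans <|
            ((Equiv.refl (Fin r)).sumCongr (finSumFinEquiv (m := q) (n := p))).trans <|
              (finSumFinEquiv (m := r) (n := q + p)).trans
                (finCongr (by omega : r + (q + p) = n + 1))

/-- The block-flip element `w_{p,q,r}` of the hyperoctahedral group: its sign component is
nontrivial exactly at the `q` middle-block positions `p, …, p + q - 1`, and its underlying
permutation is `blockFlipPerm`. -/
def blockFlip (n p q r : ℕ) (h : p + q + r = n + 1) : HyperoctahedralGroup n :=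
  ⟨fun i => if p ≤ (i : ℕ) ∧ (i : ℕ) < p + q then Multiplicative.ofAdd (1 : ZMod 2) else 1,
    blockFlipPerm n p q r h⟩

open Equiv SemidirectProduct

namespace SemidirectProduct

variable {N G : Type*} [Group N] [Group G] {φ : G →* MulAut N}

theorem inl_aut_mem {K : Subgroup (N ⋊[φ] G)} {g : G} {a : N} (hg : inr g ∈ K) (ha : inl a ∈ K) :
    inl (φ g a) ∈ K := by
  rw [inl_aut, map_inv]
  exact mul_mem (mul_mem hg ha) (inv_mem hg)

theorem inr_mem_of_closure_eq_top {K : Subgroup (N ⋊[φ] G)} {s : Set G}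
    (hs : Subgroup.closure s = ⊤) (hK : ∀ g ∈ s, inr g ∈ K) (g : G) : inr g ∈ K := by
  have : Subgroup.closure s ≤ K.comap inr := (Subgroup.closure_le _).2 hK
  rw [hs] at this
  exact this (Subgroup.mem_top g)

theorem eq_top_of_inl_mem_of_inr_mem {K : Subgroup (N ⋊[φ] G)} (hN : ∀ a, inl a ∈ K)
    (hG : ∀ g, inr g ∈ K) : K = ⊤ :=
  Subgroup.eq_top_iff' K |>.2 fun x => inl_left_mul_inr_right x ▸ mul_mem (hN _) (hG _)

end SemidirectProduct

theorem blockFlipPerm_apply_val (n p q r : ℕ) (h : p + q + r = n + 1) (i : Fin (n + 1)) :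
    (blockFlipPerm n p q r h i : ℕ) =
      if (i : ℕ) < p then r + q + i
      else if (i : ℕ) < p + q then r + (p + q - 1 - i)
      else i - (p + q) := by
  obtain ⟨j, rfl⟩ := (finCongr h).surjective i
  induction j using Fin.addCases with
  | left k =>
    induction k using Fin.addCases with
    | left a => simp [blockFlipPerm]; omega
    | right b => simp [blockFlipPerm]; omega
  | right c => simp [blockFlipPerm]; omega

theorem blockFlipPerm_eq_finRotate (n q r : ℕ) (h : n + q + r = n + 1) :
    blockFlipPerm n n q r h = finRotate (n + 1) := by
  ext i
  simp only [blockFlipPerm_apply_val, coe_finRotate, Fin.ext_iff, Fin.val_last]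
  have := i.isLt
  split_ifs <;> omega

theorem blockFlipPerm_one_one (m : ℕ) (h : m + 1 + 1 = m + 1 + 1) :
    blockFlipPerm (m + 1) m 1 1 h =
      finRotate (m + 1 + 1) ^ 2 * swap ⟨m, by omega⟩ (finRotate (m + 1 + 1) ⟨m, by omega⟩) := by
  ext i
  simp only [blockFlipPerm_apply_val, Perm.mul_apply, pow_two, swap_apply_def, coe_finRotate,
    finRotate_of_lt (Nat.lt_succ_self m), Fin.ext_iff, Fin.val_last]
  have := i.isLt
  split_ifs <;> simp_all <;> omega

theorem blockFlip_zero_middle (n p r : ℕ) (h : p + 0 + r = n + 1) :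
    blockFlip n p 0 r h = inr (blockFlipPerm n p 0 r h) := by
  ext i <;> simp [blockFlip]

theorem blockFlip_one_middle (n p r : ℕ) (h : p + 1 + r = n + 1) :
    blockFlip n p 1 r h =
      inl (Pi.mulSingle (⟨p, by omega⟩ : Fin (n + 1)) (Multiplicative.ofAdd (1 : ZMod 2))) *
        inr (blockFlipPerm n p 1 r h) := by
  rw [blockFlip, mk_eq_inl_mul_inr]
  congr
  funext i
  simp only [Pi.mulSingle_apply, Fin.ext_iff]
  exact if_congr (by omega) rfl rfl

theorem signPermAction_mulSingle (m : ℕ) (σ : Perm (Fin m)) (j : Fin m)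
    (v : Multiplicative (ZMod 2)) :
    signPermAction m σ (Pi.mulSingle j v) = Pi.mulSingle (σ j) v :=
  Pi.mulSingle_comp_equiv σ.symm j v

def smallMiddleBlockFlips (n : ℕ) : Set (HyperoctahedralGroup n) :=
  {x | ∃ (p q r : ℕ) (h : p + q + r = n + 1), q ≤ 1 ∧ x = blockFlip n p q r h}

theorem blockFlip_mem_closure {n p q r : ℕ} (h : p + q + r = n + 1) (hq : q ≤ 1) :
    blockFlip n p q r h ∈ Subgroup.closure (smallMiddleBlockFlips n) :=
  Subgroup.subset_closure ⟨p, q, r, h, hq, rfl⟩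

theorem inr_finRotate_mem_closure (n : ℕ) :
    inr (finRotate (n + 1)) ∈ Subgroup.closure (smallMiddleBlockFlips n) := by
  simpa [blockFlip_zero_middle, blockFlipPerm_eq_finRotate] using
    blockFlip_mem_closure (n := n) (p := n) (q := 0) (r := 1) rfl zero_le_one

theorem inl_mulSingle_last_mem_closure (n : ℕ) :
    inl (Pi.mulSingle (Fin.last n) (Multiplicative.ofAdd (1 : ZMod 2))) ∈
      Subgroup.closure (smallMiddleBlockFlips n) := by
  have h := blockFlip_mem_closure (n := n) (p := n) (q := 1) (r := 0) rfl le_rfl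
  rw [blockFlip_one_middle, blockFlipPerm_eq_finRotate] at h
  have h' := mul_mem h (inv_mem (inr_finRotate_mem_closure n))
  rwa [mul_inv_cancel_right] at h'

theorem inr_mem_closure (n : ℕ) (σ : Perm (Fin (n + 1))) :
    inr σ ∈ Subgroup.closure (smallMiddleBlockFlips n) := by
  cases n with
  | zero =>
    obtain rfl : σ = 1 := Subsingleton.elim (α := Perm (Fin 1)) σ 1
    exact one_mem _
  | succ m =>
    set x : Fin (m + 1 + 1) := ⟨m, by omega⟩
    have hsign : inl (Pi.mulSingle x (Multiplicative.ofAdd (1 : ZMod 2))) ∈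
        Subgroup.closure (smallMiddleBlockFlips (m + 1)) := by
      have hx : (finRotate (m + 1 + 1))⁻¹ (Fin.last (m + 1)) = x := by
        rw [Perm.inv_eq_iff_eq, finRotate_of_lt (Nat.lt_succ_self m)]
        rfl
      rw [← hx, ← signPermAction_mulSingle]
      exact inl_aut_mem (by rw [map_inv]; exact inv_mem (inr_finRotate_mem_closure (m + 1)))
        (inl_mulSingle_last_mem_closure (m + 1))
    have hswap : inr (swap x (finRotate (m + 1 + 1) x)) ∈
        Subgroup.closure (smallMiddleBlockFlips (m + 1)) := by
      have h := blockFlip_mem_closure (n := m + 1) (p := m) (q := 1) (r := 1) rfl le_rfl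
      rw [blockFlip_one_middle, blockFlipPerm_one_one, map_mul, map_pow] at h
      exact (mul_mem_cancel_left (pow_mem (inr_finRotate_mem_closure (m + 1)) 2)).1
        ((mul_mem_cancel_left hsign).1 h)
    refine inr_mem_of_closure_eq_top
      (Perm.closure_cycle_adjacent_swap isCycle_finRotate support_finRotate x) ?_ σ
    rintro τ (rfl | rfl)
    · exact inr_finRotate_mem_closure (m + 1)
    · exact hswap

theorem inl_mem_closure (n : ℕ) (f : Fin (n + 1) → Multiplicative (ZMod 2)) :
    inl f ∈ Subgroup.closure (smallMiddleBlockFlips n) := by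
  have hsingle (j : Fin (n + 1)) :
      inl (Pi.mulSingle j (f j)) ∈ Subgroup.closure (smallMiddleBlockFlips n) := by
    obtain hj | hj : f j = 1 ∨ f j = Multiplicative.ofAdd 1 := by
      generalize f j = v; revert v; decide
    · simp [hj]
    · rw [hj, ← swap_apply_left (Fin.last n) j, ← signPermAction_mulSingle]
      exact inl_aut_mem (inr_mem_closure n _) (inl_mulSingle_last_mem_closure n)
  rw [← Finset.univ_prod_mulSingle f]
  exact Subgroup.mem_comap.1 (Subgroup.prod_mem _ fun j _ => Subgroup.mem_comap.2 (hsingle j))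

/-- The hyperoctahedral group `H_{n+1}` is generated by the block-flip elements
`w_{p,q,r}` whose middle block has size at most one. -/
theorem hyperoctahedral_closure_blockFlips_small_middle (n : ℕ) :
    Subgroup.closure
      {x : HyperoctahedralGroup n |
        ∃ (p q r : ℕ) (h : p + q + r = n + 1), q ≤ 1 ∧ x = blockFlip n p q r h} = ⊤ :=
  eq_top_of_inl_mem_of_inr_mem (inl_mem_closure n) (inr_mem_closure n)
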